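/- arXiv:2002.02443 — 7 statements merged into one kernel-verified Lean document; each statement's English description precedes it below -/
import Mathlib

section
/- Let Θ₁, Θ₂ ∈ ℝ^{n×n} be antisymmetric, let J₁ = bJ ⊗ I_{m₁/2} ∈ ℝ^{m₁×m₁} and J₂ = bJ ⊗ I_{m₂/2} ∈ ℝ^{m₂×m₂}, let D ∈ ℝ^{p₁×m₁}, d ∈ ℝ^{p₂×m₂}, and set J̃₁ := D J₁ Dᵀ, J̃₂ := d J₂ dᵀ. Given symmetric R₁, R₂ ∈ ℝ^{n×n} and matrices M₁ ∈ ℝ^{m₁×n}, L₁ ∈ ℝ^{p₂×n}, M₂ ∈ ℝ^{m₂×n}, L₂ ∈ ℝ^{p₁×n}, define A = 2Θ₁(R₁ + M₁ᵀJ₁M₁ + L₁ᵀJ̃₂L₁), B = 2Θ₁M₁ᵀ, C = 2DJ₁M₁, E = 2Θ₁L₁ᵀ, a = 2Θ₂(R₂ + M₂ᵀJ₂M₂ + L₂ᵀJ̃₁L₂), b = 2Θ₂M₂ᵀ, c = 2dJ₂M₂, e = 2Θ₂L₂ᵀ. Then the closed-loop matrices 𝒜 := [[A, Ec],[eC, a]]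 and ℬ := [[B, Ed],[eD, b]] satisfy 𝒜 = 2Θ(R + MᵀJM) and ℬ = 2ΘMᵀ, where Θ := diag(Θ₁, Θ₂), J := diag(J₁, J₂), R := [[R₁, (L₁ᵀc + CᵀL₂)/2],[(cᵀL₁ + L₂ᵀC)/2, R₂]], and M := [[M₁, DᵀL₂],[dᵀL₁, M₂]]. -/
open Matrix Kronecker

lemma bJ_kron_antisymm {k : ℕ} :
    ((!![0, 1; -1, 0] : Matrix (Fin 2) (Fin 2) ℝ) ⊗ₖ (1 : Matrix (Fin k) (Fin k) ℝ))ᵀ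
    = -((!![0, 1; -1, 0] : Matrix (Fin 2) (Fin 2) ℝ) ⊗ₖ (1 : Matrix (Fin k) (Fin k) ℝ)) := by
  ext ⟨i, ki⟩ ⟨j, kj⟩
  simp [Matrix.kroneckerMap_apply, Matrix.one_apply]
  fin_cases i <;> fin_cases j <;> simp [eq_comm] <;> split <;> simp

/-- **Energy and coupling matrices of the closed-loop system.**
With the plant matrices `A = 2Θ₁(R₁ + M₁ᵀJ₁M₁ + L₁ᵀJt₂L₁)`, `B = 2Θ₁M₁ᵀ`, `C = 2DJ₁M₁`,
`E = 2Θ₁L₁ᵀ` and the controller matrices `a = 2Θ₂(R₂ + M₂ᵀJ₂M₂ + L₂ᵀJt₁L₂)`, `b = 2Θ₂M₂ᵀ`,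
`c = 2dJ₂M₂`, `e = 2Θ₂L₂ᵀ`, the closed-loop matrices `𝒜 = [[A, Ec],[eC, a]]` and
`ℬ = [[B, Ed],[eD, b]]` satisfy `𝒜 = 2Θ(R + MᵀJM)` and `ℬ = 2ΘMᵀ`, where
`Θ = diag(Θ₁,Θ₂)`, `J = diag(J₁,J₂)`,
`R = [[R₁, (L₁ᵀc + CᵀL₂)/2],[(cᵀL₁ + L₂ᵀC)/2, R₂]]` and `M = [[M₁, DᵀL₂],[dᵀL₁, M₂]]`. -/
theorem closed_loop_energy_coupling
    {n p₁ p₂ k₁ k₂ : ℕ} (hp₁ : Even p₁) (hp₂ : Even p₂)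
    (Θ₁ Θ₂ : Matrix (Fin n) (Fin n) ℝ) (hΘ₁ : Θ₁ᵀ = -Θ₁) (hΘ₂ : Θ₂ᵀ = -Θ₂)
    -- the canonical antisymmetric matrices J₁ = bJ ⊗ I_{m₁/2}, J₂ = bJ ⊗ I_{m₂/2}
    (J₁ : Matrix (Fin 2 × Fin k₁) (Fin 2 × Fin k₁) ℝ)
    (hJ₁ : J₁ = (!![0, 1; -1, 0] : Matrix (Fin 2) (Fin 2) ℝ) ⊗ₖ (1 : Matrix (Fin k₁) (Fin k₁) ℝ))
    (J₂ : Matrix (Fin 2 × Fin k₂) (Fin 2 × Fin k₂) ℝ)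
    (hJ₂ : J₂ = (!![0, 1; -1, 0] : Matrix (Fin 2) (Fin 2) ℝ) ⊗ₖ (1 : Matrix (Fin k₂) (Fin k₂) ℝ))
    (D : Matrix (Fin p₁) (Fin 2 × Fin k₁) ℝ) (d : Matrix (Fin p₂) (Fin 2 × Fin k₂) ℝ)
    (Jt₁ : Matrix (Fin p₁) (Fin p₁) ℝ) (hJt₁ : Jt₁ = D * J₁ * Dᵀ)
    (Jt₂ : Matrix (Fin p₂) (Fin p₂) ℝ) (hJt₂ : Jt₂ = d * J₂ * dᵀ)
    (R₁ R₂ : Matrix (Fin n) (Fin n) ℝ) (hR₁ : R₁ᵀ = R₁) (hR₂ : R₂ᵀ = R₂)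
    (M₁ : Matrix (Fin 2 × Fin k₁) (Fin n) ℝ) (L₁ : Matrix (Fin p₂) (Fin n) ℝ)
    (M₂ : Matrix (Fin 2 × Fin k₂) (Fin n) ℝ) (L₂ : Matrix (Fin p₁) (Fin n) ℝ)
    (A : Matrix (Fin n) (Fin n) ℝ)
    (hA : A = (2 : ℝ) • (Θ₁ * (R₁ + M₁ᵀ * J₁ * M₁ + L₁ᵀ * Jt₂ * L₁)))
    (B : Matrix (Fin n) (Fin 2 × Fin k₁) ℝ) (hB : B = (2 : ℝ) • (Θ₁ * M₁ᵀ))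
    (C : Matrix (Fin p₁) (Fin n) ℝ) (hC : C = (2 : ℝ) • (D * J₁ * M₁))
    (E : Matrix (Fin n) (Fin p₂) ℝ) (hE : E = (2 : ℝ) • (Θ₁ * L₁ᵀ))
    (a : Matrix (Fin n) (Fin n) ℝ)
    (ha : a = (2 : ℝ) • (Θ₂ * (R₂ + M₂ᵀ * J₂ * M₂ + L₂ᵀ * Jt₁ * L₂)))
    (b : Matrix (Fin n) (Fin 2 × Fin k₂) ℝ) (hb : b = (2 : ℝ) • (Θ₂ * M₂ᵀ))
    (c : Matrix (Fin p₂) (Fin n) ℝ) (hc : c = (2 : ℝ) • (d * J₂ * M₂))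
    (e : Matrix (Fin n) (Fin p₁) ℝ) (he : e = (2 : ℝ) • (Θ₂ * L₂ᵀ))
    (𝒜 : Matrix (Fin n ⊕ Fin n) (Fin n ⊕ Fin n) ℝ)
    (h𝒜 : 𝒜 = fromBlocks A (E * c) (e * C) a)
    (ℬ : Matrix (Fin n ⊕ Fin n) ((Fin 2 × Fin k₁) ⊕ (Fin 2 × Fin k₂)) ℝ)
    (hℬ : ℬ = fromBlocks B (E * d) (e * D) b)
    (Θ : Matrix (Fin n ⊕ Fin n) (Fin n ⊕ Fin n) ℝ) (hΘ : Θ = fromBlocks Θ₁ 0 0 Θ₂)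
    (J : Matrix ((Fin 2 × Fin k₁) ⊕ (Fin 2 × Fin k₂)) ((Fin 2 × Fin k₁) ⊕ (Fin 2 × Fin k₂)) ℝ)
    (hJ : J = fromBlocks J₁ 0 0 J₂)
    (R : Matrix (Fin n ⊕ Fin n) (Fin n ⊕ Fin n) ℝ)
    (hR : R = fromBlocks R₁ ((1 / 2 : ℝ) • (L₁ᵀ * c + Cᵀ * L₂))
        ((1 / 2 : ℝ) • (cᵀ * L₁ + L₂ᵀ * C)) R₂)
    (M : Matrix ((Fin 2 × Fin k₁) ⊕ (Fin 2 × Fin k₂)) (Fin n ⊕ Fin n) ℝ)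
    (hM : M = fromBlocks M₁ (Dᵀ * L₂) (dᵀ * L₁) M₂) :
    𝒜 = (2 : ℝ) • (Θ * (R + Mᵀ * J * M)) ∧ ℬ = (2 : ℝ) • (Θ * Mᵀ) := by
  have hJ₁a : J₁ᵀ = -J₁ := by rw [hJ₁]; exact bJ_kron_antisymm
  have hJ₂a : J₂ᵀ = -J₂ := by rw [hJ₂]; exact bJ_kron_antisymm
  subst hJt₁ hJt₂ hA hB hC hE ha hb hc he h𝒜 hℬ hΘ hJ hR hM
  constructor
  · rw [Matrix.fromBlocks_transpose, Matrix.fromBlocks_multiply, Matrix.fromBlocks_multiply,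
      Matrix.fromBlocks_add, Matrix.fromBlocks_multiply, Matrix.fromBlocks_smul,
      Matrix.fromBlocks_inj]
    refine ⟨?_, ?_, ?_, ?_⟩
    · simp only [Matrix.transpose_mul, Matrix.transpose_transpose, smul_zero,
        Matrix.mul_zero, Matrix.zero_mul, add_zero, zero_add, mul_add, Matrix.mul_smul,
        Matrix.smul_mul, Matrix.mul_assoc]
      module
    · simp only [Matrix.transpose_smul, Matrix.transpose_mul, Matrix.transpose_transpose, hJ₁a,
        Matrix.mul_zero, Matrix.zero_mul, add_zero, zero_add, mul_add, Matrix.add_mul,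
        Matrix.mul_smul, Matrix.smul_mul, Matrix.mul_assoc, Matrix.mul_neg, Matrix.neg_mul,
        smul_add, smul_smul, smul_neg]
      module
    · simp only [Matrix.transpose_smul, Matrix.transpose_mul, Matrix.transpose_transpose, hJ₂a,
        Matrix.mul_zero, Matrix.zero_mul, add_zero, zero_add, mul_add, Matrix.add_mul,
        Matrix.mul_smul, Matrix.smul_mul, Matrix.mul_assoc, Matrix.mul_neg, Matrix.neg_mul,
        smul_add, smul_smul, smul_neg]
      module
    · simp only [Matrix.transpose_mul, Matrix.transpose_transpose, smul_zero,
        Matrix.mul_zero, Matrix.zero_mul, add_zero, zero_add, mul_add, Matrix.mul_smul,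
        Matrix.smul_mul, Matrix.mul_assoc]
      module
  · rw [Matrix.fromBlocks_transpose, Matrix.fromBlocks_multiply, Matrix.fromBlocks_smul,
      Matrix.fromBlocks_inj]
    refine ⟨?_, ?_, ?_, ?_⟩ <;>
      simp only [Matrix.transpose_mul, Matrix.transpose_transpose, Matrix.mul_zero,
        Matrix.zero_mul, add_zero, zero_add, Matrix.mul_smul, Matrix.smul_mul,
        Matrix.mul_assoc] <;> module
end

section
/- Let Θ ∈ ℝ^{N×N} and J ∈ ℝ^{m×m} be antisymmetric, R ∈ ℝ^{N×N} symmetric, and M ∈ ℝ^{m×N}. Define 𝒜 := 2Θ(R + MᵀJM) and ℬ := 2ΘMᵀ. Then the physical realizability identity 𝒜Θ + Θ𝒜ᵀ + ℬJℬᵀ = 0 holds. -/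
open Matrix

/-- **Physical realizability identity.**  If `Θ` and `J` are antisymmetric, `R` is symmetric,
and the system matrices are `𝒜 = 2Θ(R + MᵀJM)`, `ℬ = 2ΘMᵀ`, then
`𝒜Θ + Θ𝒜ᵀ + ℬJℬᵀ = 0`. -/
theorem physical_realizability
    {N m : ℕ}
    (Θ : Matrix (Fin N) (Fin N) ℝ) (hΘ : Θᵀ = -Θ)
    (J : Matrix (Fin m) (Fin m) ℝ) (hJ : Jᵀ = -J)
    (R : Matrix (Fin N) (Fin N) ℝ) (hR : Rᵀ = R)
    (M : Matrix (Fin m) (Fin N) ℝ)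
    (𝒜 : Matrix (Fin N) (Fin N) ℝ) (h𝒜 : 𝒜 = (2 : ℝ) • (Θ * (R + Mᵀ * J * M)))
    (ℬ : Matrix (Fin N) (Fin m) ℝ) (hℬ : ℬ = (2 : ℝ) • (Θ * Mᵀ)) :
    𝒜 * Θ + Θ * 𝒜ᵀ + ℬ * J * ℬᵀ = 0 := by
  subst h𝒜 hℬ
  simp only [transpose_smul, transpose_mul, transpose_add, hΘ, hJ, hR, transpose_transpose]
  simp only [Matrix.mul_smul, Matrix.smul_mul, smul_smul]
  ring_nf
  simp only [Matrix.mul_assoc, Matrix.mul_add, Matrix.add_mul, Matrix.mul_neg,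
    Matrix.neg_mul, Matrix.smul_mul, Matrix.mul_smul]
  module
end

section
/- Let Θ₂ ∈ ℝ^{n×n} be antisymmetric and invertible, let J₂ = bJ ⊗ I_{m₂/2}, let d ∈ ℝ^{p₂×m₂}, J̃₁ ∈ ℝ^{p₁×p₁}, and let R₂ ∈ ℝ^{n×n} be symmetric, M₂ ∈ ℝ^{m₂×n}, L₂ ∈ ℝ^{p₁×n}. Define a = 2Θ₂(R₂ + M₂ᵀJ₂M₂ + L₂ᵀJ̃₁L₂), b = 2Θ₂M₂ᵀ, c = 2dJ₂M₂, e = 2Θ₂L₂ᵀ. Then a = 2Θ₂R₂ − (1/2)(bJ₂bᵀ + eJ̃₁eᵀ)Θ₂⁻¹ and c = −dJ₂bᵀΘ₂⁻¹. -/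
open Matrix Kronecker

/-- **Parameterization of the coherent quantum controller matrices.**
With `a = 2Θ₂(R₂ + M₂ᵀJ₂M₂ + L₂ᵀJ̃₁L₂)`, `b = 2Θ₂M₂ᵀ`, `c = 2dJ₂M₂`, `e = 2Θ₂L₂ᵀ`,
one has `a = 2Θ₂R₂ − (1/2)(bJ₂bᵀ + eJ̃₁eᵀ)Θ₂⁻¹` and `c = −dJ₂bᵀΘ₂⁻¹`. -/
theorem controller_parameterization
    {n p₁ p₂ k₂ : ℕ}
    (Θ₂ : Matrix (Fin n) (Fin n) ℝ) (hΘ₂ : Θ₂ᵀ = -Θ₂) (hΘ₂inv : IsUnit Θ₂.det)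
    (J₂ : Matrix (Fin 2 × Fin k₂) (Fin 2 × Fin k₂) ℝ)
    (hJ₂ : J₂ = (!![0, 1; -1, 0] : Matrix (Fin 2) (Fin 2) ℝ) ⊗ₖ (1 : Matrix (Fin k₂) (Fin k₂) ℝ))
    (d : Matrix (Fin p₂) (Fin 2 × Fin k₂) ℝ)
    (Jt₁ : Matrix (Fin p₁) (Fin p₁) ℝ)
    (R₂ : Matrix (Fin n) (Fin n) ℝ) (hR₂ : R₂ᵀ = R₂)
    (M₂ : Matrix (Fin 2 × Fin k₂) (Fin n) ℝ) (L₂ : Matrix (Fin p₁) (Fin n) ℝ)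
    (a : Matrix (Fin n) (Fin n) ℝ)
    (ha : a = (2 : ℝ) • (Θ₂ * (R₂ + M₂ᵀ * J₂ * M₂ + L₂ᵀ * Jt₁ * L₂)))
    (b : Matrix (Fin n) (Fin 2 × Fin k₂) ℝ) (hb : b = (2 : ℝ) • (Θ₂ * M₂ᵀ))
    (c : Matrix (Fin p₂) (Fin n) ℝ) (hc : c = (2 : ℝ) • (d * J₂ * M₂))
    (e : Matrix (Fin n) (Fin p₁) ℝ) (he : e = (2 : ℝ) • (Θ₂ * L₂ᵀ)) :
    a = (2 : ℝ) • (Θ₂ * R₂) - (1 / 2 : ℝ) • ((b * J₂ * bᵀ + e * Jt₁ * eᵀ) * Θ₂⁻¹) ∧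
      c = -(d * J₂ * bᵀ * Θ₂⁻¹) := by
  have hinv : Θ₂ * Θ₂⁻¹ = 1 := Matrix.mul_nonsing_inv Θ₂ hΘ₂inv
  have hbT : bᵀ * Θ₂⁻¹ = (-2 : ℝ) • M₂ := by
    rw [hb]
    simp [hΘ₂, Matrix.mul_assoc, hinv, Matrix.mul_neg, Matrix.neg_mul]
  have heT : eᵀ * Θ₂⁻¹ = (-2 : ℝ) • L₂ := by
    rw [he]
    simp [hΘ₂, Matrix.mul_assoc, hinv, Matrix.mul_neg, Matrix.neg_mul]
  have key1 : (b * J₂ * bᵀ) * Θ₂⁻¹ = (-4 : ℝ) • (Θ₂ * (M₂ᵀ * J₂ * M₂)) := by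
    rw [Matrix.mul_assoc (b * J₂), hbT, hb]
    simp [Matrix.mul_smul, Matrix.smul_mul, smul_smul, Matrix.mul_assoc]
    norm_num
  have key2 : (e * Jt₁ * eᵀ) * Θ₂⁻¹ = (-4 : ℝ) • (Θ₂ * (L₂ᵀ * Jt₁ * L₂)) := by
    rw [Matrix.mul_assoc (e * Jt₁), heT, he]
    simp [Matrix.mul_smul, Matrix.smul_mul, smul_smul, Matrix.mul_assoc]
    norm_num
  constructor
  · rw [ha, Matrix.add_mul, key1, key2]
    rw [mul_add, mul_add, smul_add, smul_add, smul_add, smul_smul, smul_smul]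
    norm_num
    abel
  · rw [Matrix.mul_assoc (d * J₂), hbT, hc]
    simp [Matrix.mul_smul, Matrix.mul_assoc]
end

section
/- Let Θ₂ ∈ ℝ^{n×n} be antisymmetric and invertible, let J₂ = bJ ⊗ I_{m₂/2} (so J₂ is antisymmetric with J₂² = −I_{m₂}), and let d ∈ ℝ^{p₂×m₂} satisfy ddᵀ = I_{p₂}. Then for any c ∈ ℝ^{p₂×n}, a matrix b ∈ ℝ^{n×m₂} satisfies c = −dJ₂bᵀΘ₂⁻¹ if and only if b = Θ₂(cᵀd + χ(I_{m₂} − dᵀd))J₂ for some χ ∈ ℝ^{n×m₂}. In particular, the linear map b ↦ −dJ₂bᵀΘ₂⁻¹ from ℝ^{n×m₂} to ℝ^{p₂×n} is surjective. -/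
open Matrix Kronecker

lemma bJ_sq : (!![0, 1; -1, 0] : Matrix (Fin 2) (Fin 2) ℝ) * !![0, 1; -1, 0] = -1 := by
  ext i j
  fin_cases i <;> fin_cases j <;> simp [Matrix.mul_apply, Fin.sum_univ_succ, Matrix.one_apply]

lemma bJ_tr : (!![0, 1; -1, 0] : Matrix (Fin 2) (Fin 2) ℝ)ᵀ = -!![0, 1; -1, 0] := by
  ext i j
  fin_cases i <;> fin_cases j <;> simp

/-- **Characterization of the controller gain matrices producing a given output matrix.**
For `ddᵀ = I`, a matrix `b` satisfies `c = −dJ₂bᵀΘ₂⁻¹` iff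
`b = Θ₂(cᵀd + χ(I − dᵀd))J₂` for some `χ`; in particular `b ↦ −dJ₂bᵀΘ₂⁻¹` is surjective. -/
theorem controller_gain_parameterization
    {n p₂ k₂ : ℕ}
    (Θ₂ : Matrix (Fin n) (Fin n) ℝ) (hΘ₂ : Θ₂ᵀ = -Θ₂) (hΘ₂inv : IsUnit Θ₂.det)
    (J₂ : Matrix (Fin 2 × Fin k₂) (Fin 2 × Fin k₂) ℝ)
    (hJ₂ : J₂ = (!![0, 1; -1, 0] : Matrix (Fin 2) (Fin 2) ℝ) ⊗ₖ (1 : Matrix (Fin k₂) (Fin k₂) ℝ))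
    (d : Matrix (Fin p₂) (Fin 2 × Fin k₂) ℝ) (hd : d * dᵀ = 1) :
    (∀ c : Matrix (Fin p₂) (Fin n) ℝ, ∀ b : Matrix (Fin n) (Fin 2 × Fin k₂) ℝ,
      c = -(d * J₂ * bᵀ * Θ₂⁻¹) ↔
        ∃ χ : Matrix (Fin n) (Fin 2 × Fin k₂) ℝ,
          b = Θ₂ * (cᵀ * d + χ * (1 - dᵀ * d)) * J₂) ∧
    Function.Surjective
      (fun b : Matrix (Fin n) (Fin 2 × Fin k₂) ℝ => -(d * J₂ * bᵀ * Θ₂⁻¹)) := by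
  have hJsq : J₂ * J₂ = -1 := by
    rw [hJ₂, ← Matrix.mul_kronecker_mul, bJ_sq, Matrix.one_mul]
    rw [show (-1 : Matrix (Fin 2) (Fin 2) ℝ) = (-1 : ℝ) • 1 by simp,
      Matrix.smul_kronecker, Matrix.one_kronecker_one]
    simp
  have hJtr : J₂ᵀ = -J₂ := by
    rw [hJ₂, ← Matrix.kroneckerMap_transpose, bJ_tr, Matrix.transpose_one]
    rw [show (-(!![0, 1; -1, 0] : Matrix (Fin 2) (Fin 2) ℝ)) = (-1 : ℝ) • !![0, 1; -1, 0] by simp,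
      Matrix.smul_kronecker]
    simp
  have hΘl : Θ₂ * Θ₂⁻¹ = 1 := Matrix.mul_nonsing_inv _ hΘ₂inv
  have hΘinvtr : (Θ₂⁻¹)ᵀ = -Θ₂⁻¹ := by
    rw [Matrix.transpose_nonsing_inv, hΘ₂]
    refine Matrix.inv_eq_right_inv ?_
    rw [Matrix.neg_mul, Matrix.mul_neg, neg_neg, hΘl]
  have key : ∀ c : Matrix (Fin p₂) (Fin n) ℝ, ∀ b : Matrix (Fin n) (Fin 2 × Fin k₂) ℝ,
      c = -(d * J₂ * bᵀ * Θ₂⁻¹) ↔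
        ∃ χ : Matrix (Fin n) (Fin 2 × Fin k₂) ℝ,
          b = Θ₂ * (cᵀ * d + χ * (1 - dᵀ * d)) * J₂ := by
    intro c b
    constructor
    · rintro rfl
      refine ⟨-(Θ₂⁻¹ * b * J₂), ?_⟩
      have hct : (-(d * J₂ * bᵀ * Θ₂⁻¹))ᵀ = -(Θ₂⁻¹ * b * J₂ * dᵀ) := by
        simp only [Matrix.transpose_neg, Matrix.transpose_mul, Matrix.transpose_transpose,
          hΘinvtr, hJtr, Matrix.neg_mul, Matrix.mul_neg, neg_neg, Matrix.mul_assoc]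
      rw [hct]
      have h1 : -(Θ₂⁻¹ * b * J₂ * dᵀ) * d + -(Θ₂⁻¹ * b * J₂) * (1 - dᵀ * d)
          = -(Θ₂⁻¹ * b * J₂) := by
        simp only [Matrix.neg_mul, Matrix.mul_sub, Matrix.mul_one, Matrix.mul_assoc]
        abel
      rw [h1]
      have h2 : Θ₂ * -(Θ₂⁻¹ * b * J₂) * J₂ = -(Θ₂ * Θ₂⁻¹ * (b * (J₂ * J₂))) := by
        simp only [Matrix.mul_neg, Matrix.neg_mul, Matrix.mul_assoc]
      rw [h2, hΘl, hJsq, Matrix.one_mul, Matrix.mul_neg, Matrix.mul_one, neg_neg]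
    · rintro ⟨χ, rfl⟩
      set X : Matrix (Fin 2 × Fin k₂) (Fin n) ℝ := dᵀ * c + (1 - dᵀ * d) * χᵀ with hX
      have hbt : (Θ₂ * (cᵀ * d + χ * (1 - dᵀ * d)) * J₂)ᵀ = J₂ * X * Θ₂ := by
        simp only [hX, Matrix.transpose_mul, Matrix.transpose_add, Matrix.transpose_sub,
          Matrix.transpose_one, Matrix.transpose_transpose, hΘ₂, hJtr, Matrix.neg_mul,
          Matrix.mul_neg, neg_neg, Matrix.mul_assoc, Matrix.add_mul, Matrix.mul_add,
          neg_add, neg_neg]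
      rw [hbt]
      have h3 : d * J₂ * (J₂ * X * Θ₂) * Θ₂⁻¹ = d * (J₂ * J₂) * (X * (Θ₂ * Θ₂⁻¹)) := by
        simp only [Matrix.mul_assoc]
      rw [h3, hJsq, hΘl, Matrix.mul_one, Matrix.mul_neg, Matrix.mul_one, Matrix.neg_mul, neg_neg]
      have h4 : d * X = c := by
        simp only [hX, Matrix.mul_add, Matrix.sub_mul, Matrix.mul_sub, Matrix.one_mul,
          ← Matrix.mul_assoc, hd]
        simp
      rw [h4]
  refine ⟨key, fun c => ⟨Θ₂ * (cᵀ * d) * J₂, ?_⟩⟩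
  have h := (key c (Θ₂ * (cᵀ * d + 0 * (1 - dᵀ * d)) * J₂)).mpr ⟨0, rfl⟩
  rw [Matrix.zero_mul, add_zero] at h
  exact h.symm
end

section
/- Let 𝒜_T ∈ ℝ^{N×N}, 𝒞 ∈ ℝ^{r×N}, and W ∈ ℝ^{N×N} symmetric. Suppose symmetric matrices P_T, Q_T ∈ ℝ^{N×N} satisfy the algebraic Lyapunov equations 𝒜_T P_T + P_T 𝒜_Tᵀ + W = 0 and 𝒜_Tᵀ Q_T + Q_T 𝒜_T + 𝒞ᵀ𝒞 = 0. Then (1/2)⟨𝒞ᵀ𝒞, P_T⟩ = (1/2)⟨Q_T, W⟩ = −⟨𝒜_T, Γ_T⟩, where Γ_T := Q_T P_T. -/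
open Matrix

/-- **Three representations of the discounted mean square cost.**
If `𝒜_T P_T + P_T 𝒜_Tᵀ + W = 0` and `𝒜_Tᵀ Q_T + Q_T 𝒜_T + 𝒞ᵀ𝒞 = 0` with `P_T`, `Q_T`, `W`
symmetric, then `(1/2)⟨𝒞ᵀ𝒞, P_T⟩ = (1/2)⟨Q_T, W⟩ = −⟨𝒜_T, Γ_T⟩` with `Γ_T = Q_T P_T`,
where `⟨X,Y⟩ = tr(XᵀY)` is the Frobenius inner product. -/
theorem discounted_cost_representations
    {N r : ℕ} (𝒜T : Matrix (Fin N) (Fin N) ℝ) (𝒞 : Matrix (Fin r) (Fin N) ℝ)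
    (W : Matrix (Fin N) (Fin N) ℝ) (hW : Wᵀ = W)
    (PT QT : Matrix (Fin N) (Fin N) ℝ) (hPsymm : PTᵀ = PT) (hQsymm : QTᵀ = QT)
    (hP : 𝒜T * PT + PT * 𝒜Tᵀ + W = 0)
    (hQ : 𝒜Tᵀ * QT + QT * 𝒜T + 𝒞ᵀ * 𝒞 = 0)
    (ΓT : Matrix (Fin N) (Fin N) ℝ) (hΓ : ΓT = QT * PT) :
    (1 / 2 : ℝ) * ((𝒞ᵀ * 𝒞)ᵀ * PT).trace = (1 / 2 : ℝ) * (QTᵀ * W).trace ∧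
    (1 / 2 : ℝ) * (QTᵀ * W).trace = -(𝒜Tᵀ * ΓT).trace := by
  have hCC : 𝒞ᵀ * 𝒞 = -(𝒜Tᵀ * QT + QT * 𝒜T) := eq_neg_of_add_eq_zero_right hQ
  have hWeq : W = -(𝒜T * PT + PT * 𝒜Tᵀ) := eq_neg_of_add_eq_zero_right hP
  -- key trace identity : tr(Q 𝒜 P) = tr(𝒜ᵀ (Q P))
  have key : (QT * 𝒜T * PT).trace = (𝒜Tᵀ * (QT * PT)).trace := by
    calc (QT * 𝒜T * PT).trace = ((QT * 𝒜T * PT)ᵀ).trace := (trace_transpose _).symm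
      _ = (PT * (𝒜Tᵀ * QT)).trace := by
          rw [transpose_mul, transpose_mul, hPsymm, hQsymm]
      _ = (𝒜Tᵀ * QT * PT).trace := trace_mul_comm _ _
      _ = (𝒜Tᵀ * (QT * PT)).trace := by rw [mul_assoc]
  have key2 : (QT * (PT * 𝒜Tᵀ)).trace = (𝒜Tᵀ * (QT * PT)).trace := by
    rw [← mul_assoc, trace_mul_comm]
  have h1 : ((𝒞ᵀ * 𝒞)ᵀ * PT).trace = -(2 * (𝒜Tᵀ * (QT * PT)).trace) := by
    rw [transpose_mul, transpose_transpose, hCC]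
    rw [neg_mul, trace_neg, add_mul, trace_add, mul_assoc, mul_assoc, ← mul_assoc QT, key]
    ring
  have h2 : (QTᵀ * W).trace = -(2 * (𝒜Tᵀ * (QT * PT)).trace) := by
    rw [hQsymm, hWeq, mul_neg, trace_neg, mul_add, trace_add, ← mul_assoc, key, key2]
    ring
  have h3 : -(𝒜Tᵀ * ΓT).trace = -((𝒜Tᵀ * (QT * PT)).trace) := by rw [hΓ]
  constructor
  · rw [h1, h2]
  · rw [h2, h3]; ring
end

section
/- Under the setup where, for a controller triple Π = (R₂, b, e) with R₂ symmetric, the matrices a := 2Θ₂R₂ − (1/2)(bJ₂bᵀ + eJ̃₁eᵀ)Θ₂⁻¹, c := −dJ₂bᵀΘ₂⁻¹, 𝒜(Π) := [[A, Ec],[eC, a]], ℬ(Π) := [[B, Ed],[eD, b]], 𝒞(Π) := [F, Gc] are defined (with Θ₂ antisymmetric invertible), let σ ∈ ℝ^{n×n} be symplectic in the sense σΘ₂σᵀ = Θ₂, and set Π̃ := (σ⁻ᵀR₂σ⁻¹, σb, σe) and S := diag(I_n, σ). Then 𝒜(Π̃) = S 𝒜(Π) S⁻¹, ℬ(Π̃)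 = S ℬ(Π), and 𝒞(Π̃) = 𝒞(Π) S⁻¹. Consequently, 𝒜(Π̃) − (1/(2T))I_{2n} is Hurwitz if and only if 𝒜(Π) − (1/(2T))I_{2n} is, and if P_T solves 𝒜_T(Π) P_T + P_T 𝒜_T(Π)ᵀ + (1/T)Σ + ℬ(Π)ℬ(Π)ᵀ = 0, then P̃_T := S P_T Sᵀ solves the corresponding equation for Π̃ with initial covariance SΣSᵀ, and (1/2)tr(𝒞(Π̃)ᵀ𝒞(Π̃) P̃_T) = (1/2)tr(𝒞(Π)ᵀ𝒞(Π) P_T), i.e. the discounted mean square cost is invariant under the symplectic similarity transformation 𝔖_σ. -/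
open Matrix Kronecker

/-- A real square matrix is Hurwitz if all its (complex) eigenvalues have negative real part. -/
def IsHurwitz {ι : Type*} [Fintype ι] [DecidableEq ι] (A : Matrix ι ι ℝ) : Prop :=
  ∀ μ ∈ spectrum ℂ (A.map (Complex.ofReal : ℝ → ℂ)), μ.re < 0

/-!
A symplectic `σ` (`σΘσᵀ = Θ`, `Θ` invertible) is invertible and satisfies
`σᵀΘ⁻¹ = Θ⁻¹σ⁻¹` and `Θσ⁻ᵀ = σΘ`. These two identities turn the controller matrices of `Π̃` into
`σaσ⁻¹` and `cσ⁻¹`, so the closed loop of `Π̃` is that of `Π` under the state-space change of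
coordinates `S = diag(I, σ)`. A similarity preserves the complex spectrum, hence Hurwitzness of
`𝒜_T`; it maps a solution `P` of the Lyapunov equation to the congruent `SPSᵀ`; and the cost
`tr(𝒞ᵀ𝒞P)` is unchanged because `S⁻ᵀ` and `Sᵀ` cancel under the cyclic trace.
-/

namespace Matrix

variable {R : Type*} [CommRing R] {m : Type*} [Fintype m]

section Symplectic

variable [DecidableEq m] {Θ σ : Matrix m m R}

theorem isUnit_det_of_mul_mul_transpose_eq (hΘ : IsUnit Θ.det) (hσ : σ * Θ * σᵀ = Θ) :
    IsUnit σ.det := by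
  have hdet : σ.det * Θ.det * σ.det = Θ.det := by
    simpa only [det_mul, det_transpose] using congrArg det hσ
  exact isUnit_of_mul_isUnit_left (x := σ.det) (y := Θ.det * σ.det)
    (by rw [← mul_assoc, hdet]; exact hΘ)

theorem transpose_mul_inv_of_symplectic (hΘ : IsUnit Θ.det) (hσ : σ * Θ * σᵀ = Θ) :
    σᵀ * Θ⁻¹ = Θ⁻¹ * σ⁻¹ := by
  have hσinv : σ⁻¹ * σ = 1 := nonsing_inv_mul σ (isUnit_det_of_mul_mul_transpose_eq hΘ hσ)
  have hΘσ : Θ * σᵀ = σ⁻¹ * Θ := by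
    calc Θ * σᵀ = σ⁻¹ * (σ * Θ * σᵀ) := by
          rw [← Matrix.mul_assoc, ← Matrix.mul_assoc, hσinv, Matrix.one_mul]
      _ = σ⁻¹ * Θ := by rw [hσ]
  calc σᵀ * Θ⁻¹ = Θ⁻¹ * (Θ * σᵀ) * Θ⁻¹ := by
        rw [← Matrix.mul_assoc, nonsing_inv_mul Θ hΘ, Matrix.one_mul]
    _ = Θ⁻¹ * σ⁻¹ := by
        rw [hΘσ, Matrix.mul_assoc, Matrix.mul_assoc, mul_nonsing_inv Θ hΘ, Matrix.mul_one]

theorem mul_inv_transpose_of_symplectic (hΘ : IsUnit Θ.det) (hσ : σ * Θ * σᵀ = Θ) :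
    Θ * σ⁻¹ᵀ = σ * Θ := by
  have hσinv : σ⁻¹ * σ = 1 := nonsing_inv_mul σ (isUnit_det_of_mul_mul_transpose_eq hΘ hσ)
  calc Θ * σ⁻¹ᵀ = σ * Θ * (σᵀ * σ⁻¹ᵀ) := by rw [← Matrix.mul_assoc, hσ]
    _ = σ * Θ := by rw [← transpose_mul, hσinv, transpose_one, Matrix.mul_one]

theorem mul_transpose_mul_inv_of_symplectic {k p : Type*} [Fintype k] (hΘ : IsUnit Θ.det)
    (hσ : σ * Θ * σᵀ = Θ) (X : Matrix p k R) (b : Matrix m k R) :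
    X * (σ * b)ᵀ * Θ⁻¹ = X * bᵀ * Θ⁻¹ * σ⁻¹ := by
  rw [transpose_mul, Matrix.mul_assoc X, Matrix.mul_assoc X, Matrix.mul_assoc bᵀ,
    transpose_mul_inv_of_symplectic hΘ hσ, Matrix.mul_assoc X, Matrix.mul_assoc bᵀ]

theorem drift_of_symplectic {k p : Type*} [Fintype k] [Fintype p] (hΘ : IsUnit Θ.det)
    (hσ : σ * Θ * σᵀ = Θ) (s t : R) (J : Matrix k k R) (J' : Matrix p p R) (Q : Matrix m m R)
    (b : Matrix m k R) (e : Matrix m p R) :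
    s • (Θ * (σ⁻¹ᵀ * Q * σ⁻¹)) - t • ((σ * b * J * (σ * b)ᵀ + σ * e * J' * (σ * e)ᵀ) * Θ⁻¹) =
      σ * (s • (Θ * Q) - t • ((b * J * bᵀ + e * J' * eᵀ) * Θ⁻¹)) * σ⁻¹ := by
  have hbJb : σ * b * J * (σ * b)ᵀ = σ * (b * J * bᵀ) * σᵀ := by
    simp only [transpose_mul, Matrix.mul_assoc]
  have heJe : σ * e * J' * (σ * e)ᵀ = σ * (e * J' * eᵀ) * σᵀ := by
    simp only [transpose_mul, Matrix.mul_assoc]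
  have hnoise : σ * (b * J * bᵀ + e * J' * eᵀ) * σᵀ * Θ⁻¹ =
      σ * ((b * J * bᵀ + e * J' * eᵀ) * Θ⁻¹) * σ⁻¹ := by
    rw [Matrix.mul_assoc _ σᵀ, transpose_mul_inv_of_symplectic hΘ hσ]
    simp only [Matrix.mul_assoc]
  have hgain : Θ * (σ⁻¹ᵀ * Q * σ⁻¹) = σ * (Θ * Q) * σ⁻¹ := by
    rw [← Matrix.mul_assoc, ← Matrix.mul_assoc, mul_inv_transpose_of_symplectic hΘ hσ]
    simp only [Matrix.mul_assoc]
  rw [hbJb, heJe, ← Matrix.add_mul, ← Matrix.mul_add, hnoise, hgain, Matrix.mul_sub,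
    Matrix.sub_mul, Matrix.mul_smul, Matrix.smul_mul, Matrix.mul_smul, Matrix.smul_mul]

end Symplectic

section BlockDiagonal

variable {n : Type*} [Fintype n] [DecidableEq n]

theorem inv_fromBlocks_one_zero_zero [DecidableEq m] {σ : Matrix m m R} (hσ : IsUnit σ.det) :
    (fromBlocks (1 : Matrix n n R) 0 0 σ)⁻¹ = fromBlocks 1 0 0 σ⁻¹ := by
  rw [inv_fromBlocks_zero₂₁_of_isUnit_iff _ _ _
    (iff_of_true isUnit_one ((isUnit_iff_isUnit_det σ).mpr hσ))]
  simp

theorem isUnit_det_fromBlocks_one_zero_zero [DecidableEq m] {σ : Matrix m m R} (hσ : IsUnit σ.det) :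
    IsUnit (fromBlocks (1 : Matrix n n R) 0 0 σ).det := by
  simpa [det_fromBlocks_zero₂₁] using hσ

theorem fromBlocks_one_zero_zero_conj (σ τ : Matrix m m R) (A : Matrix n n R) (B : Matrix n m R)
    (C : Matrix m n R) (D : Matrix m m R) :
    fromBlocks 1 0 0 σ * fromBlocks A B C D * fromBlocks 1 0 0 τ =
      fromBlocks A (B * τ) (σ * C) (σ * D * τ) := by
  simp [fromBlocks_multiply]

theorem fromBlocks_one_zero_zero_mul {k l : Type*} (σ : Matrix m m R) (A : Matrix n k R)
    (B : Matrix n l R) (C : Matrix m k R) (D : Matrix m l R) :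
    fromBlocks (1 : Matrix n n R) 0 0 σ * fromBlocks A B C D = fromBlocks A B (σ * C) (σ * D) := by
  simp [fromBlocks_multiply]

theorem fromCols_mul_fromBlocks_one_zero_zero {r : Type*} (τ : Matrix m m R) (F : Matrix r n R)
    (G : Matrix r m R) :
    fromCols F G * fromBlocks (1 : Matrix n n R) 0 0 τ = fromCols F (G * τ) := by
  simp [fromCols_mul_fromBlocks]

end BlockDiagonal

section Similarity

variable [DecidableEq m] {S : Matrix m m R}

theorem conj_sub_smul_one (hS : IsUnit S.det) (X : Matrix m m R) (t : R) :
    S * X * S⁻¹ - t • 1 = S * (X - t • 1) * S⁻¹ := by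
  rw [Matrix.mul_sub, Matrix.sub_mul, Matrix.mul_smul, Matrix.smul_mul, Matrix.mul_one,
    mul_nonsing_inv S hS]

theorem lyapunov_conj {k : Type*} [Fintype k] (hS : IsUnit S.det) (X P Q : Matrix m m R)
    (B : Matrix m k R) (t : R) :
    S * X * S⁻¹ * (S * P * Sᵀ) + S * P * Sᵀ * (S * X * S⁻¹)ᵀ + t • (S * Q * Sᵀ) +
        S * B * (S * B)ᵀ =
      S * (X * P + P * Xᵀ + t • Q + B * Bᵀ) * Sᵀ := by
  have hSS : ∀ M : Matrix m m R, S⁻¹ * (S * M) = M := fun M => by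
    rw [← Matrix.mul_assoc, nonsing_inv_mul S hS, Matrix.one_mul]
  have hSSt : ∀ M : Matrix m m R, Sᵀ * (S⁻¹ᵀ * M) = M := fun M => by
    rw [← Matrix.mul_assoc, ← transpose_mul, nonsing_inv_mul S hS, transpose_one, Matrix.one_mul]
  simp only [transpose_mul, Matrix.mul_add, Matrix.add_mul, Matrix.mul_smul, Matrix.smul_mul,
    Matrix.mul_assoc, hSS, hSSt]

theorem trace_conj_congr {r : Type*} [Fintype r] (hS : IsUnit S.det) (C : Matrix r m R)
    (P : Matrix m m R) :
    ((C * S⁻¹)ᵀ * (C * S⁻¹) * (S * P * Sᵀ)).trace = (Cᵀ * C * P).trace := by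
  have hCC : (C * S⁻¹)ᵀ * (C * S⁻¹) * (S * P * Sᵀ) = S⁻¹ᵀ * (Cᵀ * C * P) * Sᵀ := by
    rw [transpose_mul]
    simp only [Matrix.mul_assoc, ← Matrix.mul_assoc S⁻¹ S, nonsing_inv_mul S hS, Matrix.one_mul]
  rw [hCC, trace_mul_cycle, ← Matrix.mul_assoc, ← transpose_mul, nonsing_inv_mul S hS,
    transpose_one, Matrix.one_mul]

end Similarity

end Matrix

theorem isHurwitz_conj_iff {ι : Type*} [Fintype ι] [DecidableEq ι] {S : Matrix ι ι ℝ}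
    (hS : IsUnit S.det) (X : Matrix ι ι ℝ) : IsHurwitz (S * X * S⁻¹) ↔ IsHurwitz X := by
  let φ := (algebraMap ℝ ℂ).mapMatrix (m := ι)
  let u : (Matrix ι ι ℂ)ˣ := Units.map φ.toMonoidHom (nonsingInvUnit S hS)
  have hspec : spectrum ℂ (φ (S * X * S⁻¹)) = spectrum ℂ (φ X) := by
    rw [map_mul, map_mul]
    -- `u` and `u⁻¹` coerce to `φ S` and `φ S⁻¹` definitionally
    exact spectrum.units_conjugate (u := u)
  unfold IsHurwitz
  have hφ : ∀ M : Matrix ι ι ℝ, M.map (Complex.ofReal : ℝ → ℂ) = φ M := fun _ => rfl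
  rw [hφ, hφ, hspec]

theorem symplectic_invariance_discounted_cost_general
    {n p₁ p₂ k₁ k₂ r : ℕ}
    (Θ₂ : Matrix (Fin n) (Fin n) ℝ) (hΘ₂inv : IsUnit Θ₂.det)
    (J₂ : Matrix (Fin 2 × Fin k₂) (Fin 2 × Fin k₂) ℝ)
    (A : Matrix (Fin n) (Fin n) ℝ) (B : Matrix (Fin n) (Fin 2 × Fin k₁) ℝ)
    (C : Matrix (Fin p₁) (Fin n) ℝ) (D : Matrix (Fin p₁) (Fin 2 × Fin k₁) ℝ)
    (E : Matrix (Fin n) (Fin p₂) ℝ)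
    (d : Matrix (Fin p₂) (Fin 2 × Fin k₂) ℝ)
    (F : Matrix (Fin r) (Fin n) ℝ) (G : Matrix (Fin r) (Fin p₂) ℝ)
    (Jt₁ : Matrix (Fin p₁) (Fin p₁) ℝ)
    -- the controller parameters Π = (R₂, b, e) and the associated matrices
    (R₂ : Matrix (Fin n) (Fin n) ℝ)
    (b : Matrix (Fin n) (Fin 2 × Fin k₂) ℝ) (e : Matrix (Fin n) (Fin p₁) ℝ)
    (a : Matrix (Fin n) (Fin n) ℝ)
    (ha : a = (2 : ℝ) • (Θ₂ * R₂) - (1 / 2 : ℝ) • ((b * J₂ * bᵀ + e * Jt₁ * eᵀ) * Θ₂⁻¹))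
    (c : Matrix (Fin p₂) (Fin n) ℝ) (hc : c = -(d * J₂ * bᵀ * Θ₂⁻¹))
    (𝒜 : Matrix (Fin n ⊕ Fin n) (Fin n ⊕ Fin n) ℝ)
    (h𝒜 : 𝒜 = fromBlocks A (E * c) (e * C) a)
    (ℬ : Matrix (Fin n ⊕ Fin n) ((Fin 2 × Fin k₁) ⊕ (Fin 2 × Fin k₂)) ℝ)
    (hℬ : ℬ = fromBlocks B (E * d) (e * D) b)
    (𝒞 : Matrix (Fin r) (Fin n ⊕ Fin n) ℝ) (h𝒞 : 𝒞 = fromCols F (G * c))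
    -- a symplectic similarity transformation σ and the transformed parameters Π̃
    (σ : Matrix (Fin n) (Fin n) ℝ) (hσ : σ * Θ₂ * σᵀ = Θ₂)
    (R₂' : Matrix (Fin n) (Fin n) ℝ) (hR₂' : R₂' = (σ⁻¹)ᵀ * R₂ * σ⁻¹)
    (b' : Matrix (Fin n) (Fin 2 × Fin k₂) ℝ) (hb' : b' = σ * b)
    (e' : Matrix (Fin n) (Fin p₁) ℝ) (he' : e' = σ * e)
    (a' : Matrix (Fin n) (Fin n) ℝ)
    (ha' : a' = (2 : ℝ) • (Θ₂ * R₂') - (1 / 2 : ℝ) • ((b' * J₂ * b'ᵀ + e' * Jt₁ * e'ᵀ) * Θ₂⁻¹))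
    (c' : Matrix (Fin p₂) (Fin n) ℝ) (hc' : c' = -(d * J₂ * b'ᵀ * Θ₂⁻¹))
    (𝒜' : Matrix (Fin n ⊕ Fin n) (Fin n ⊕ Fin n) ℝ)
    (h𝒜' : 𝒜' = fromBlocks A (E * c') (e' * C) a')
    (ℬ' : Matrix (Fin n ⊕ Fin n) ((Fin 2 × Fin k₁) ⊕ (Fin 2 × Fin k₂)) ℝ)
    (hℬ' : ℬ' = fromBlocks B (E * d) (e' * D) b')
    (𝒞' : Matrix (Fin r) (Fin n ⊕ Fin n) ℝ) (h𝒞' : 𝒞' = fromCols F (G * c'))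
    (S : Matrix (Fin n ⊕ Fin n) (Fin n ⊕ Fin n) ℝ) (hS : S = fromBlocks 1 0 0 σ) :
    𝒜' = S * 𝒜 * S⁻¹ ∧
    ℬ' = S * ℬ ∧
    𝒞' = 𝒞 * S⁻¹ ∧
    (∀ T : ℝ, 0 < T →
      (IsHurwitz (𝒜' - (1 / (2 * T)) • 1) ↔ IsHurwitz (𝒜 - (1 / (2 * T)) • 1))) ∧
    (∀ T : ℝ, 0 < T →
      ∀ Sgm PT : Matrix (Fin n ⊕ Fin n) (Fin n ⊕ Fin n) ℝ, Sgmᵀ = Sgm →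
        (𝒜 - (1 / (2 * T)) • 1) * PT + PT * (𝒜 - (1 / (2 * T)) • 1)ᵀ +
          (1 / T) • Sgm + ℬ * ℬᵀ = 0 →
        ((𝒜' - (1 / (2 * T)) • 1) * (S * PT * Sᵀ) + (S * PT * Sᵀ) * (𝒜' - (1 / (2 * T)) • 1)ᵀ +
            (1 / T) • (S * Sgm * Sᵀ) + ℬ' * ℬ'ᵀ = 0 ∧
          (1 / 2 : ℝ) * (𝒞'ᵀ * 𝒞' * (S * PT * Sᵀ)).trace =
            (1 / 2 : ℝ) * (𝒞ᵀ * 𝒞 * PT).trace)) := by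
  have hσdet : IsUnit σ.det := isUnit_det_of_mul_mul_transpose_eq hΘ₂inv hσ
  have hSdet : IsUnit S.det := hS ▸ isUnit_det_fromBlocks_one_zero_zero hσdet
  have hSinv : S⁻¹ = fromBlocks 1 0 0 σ⁻¹ := hS ▸ inv_fromBlocks_one_zero_zero hσdet
  have hc'c : c' = c * σ⁻¹ := by
    rw [hc', hc, hb', mul_transpose_mul_inv_of_symplectic hΘ₂inv hσ, Matrix.neg_mul]
  have ha'a : a' = σ * a * σ⁻¹ := by
    rw [ha', ha, hR₂', hb', he', drift_of_symplectic hΘ₂inv hσ]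
  have h𝒜S : 𝒜' = S * 𝒜 * S⁻¹ := by
    rw [h𝒜', h𝒜, hSinv, hS, fromBlocks_one_zero_zero_conj, hc'c, ha'a, he']
    simp only [Matrix.mul_assoc]
  have hℬS : ℬ' = S * ℬ := by
    rw [hℬ', hℬ, hS, fromBlocks_one_zero_zero_mul, hb', he', Matrix.mul_assoc]
  have h𝒞S : 𝒞' = 𝒞 * S⁻¹ := by
    rw [h𝒞', h𝒞, hSinv, fromCols_mul_fromBlocks_one_zero_zero, hc'c, Matrix.mul_assoc]
  have hshift : ∀ t : ℝ, 𝒜' - t • 1 = S * (𝒜 - t • 1) * S⁻¹ := fun t => by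
    rw [h𝒜S, conj_sub_smul_one hSdet]
  refine ⟨h𝒜S, hℬS, h𝒞S, fun T _ => ?_, fun T _ Sgm PT _ hALE => ⟨?_, ?_⟩⟩
  · rw [hshift, isHurwitz_conj_iff hSdet]
  · rw [hshift, hℬS, lyapunov_conj hSdet, hALE, Matrix.mul_zero, Matrix.zero_mul]
  · rw [h𝒞S, trace_conj_congr hSdet]

/-- **Symplectic invariance of the closed-loop system and of the discounted cost.**
For a symplectic `σ` (`σΘ₂σᵀ = Θ₂`) and the transformed controller parameters
`Π̃ = (σ⁻ᵀR₂σ⁻¹, σb, σe)`, with `S = diag(I, σ)` one has `𝒜(Π̃) = S𝒜(Π)S⁻¹`,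
`ℬ(Π̃) = Sℬ(Π)`, `𝒞(Π̃) = 𝒞(Π)S⁻¹`; hence `𝒜_T(Π̃)` is Hurwitz iff `𝒜_T(Π)` is, the matrix
`SP_TSᵀ` solves the ALE for `Π̃` with initial covariance `SΣSᵀ`, and the discounted mean
square cost is invariant. -/
theorem symplectic_invariance_discounted_cost
    {n p₁ p₂ k₁ k₂ r : ℕ}
    (Θ₂ : Matrix (Fin n) (Fin n) ℝ) (hΘ₂ : Θ₂ᵀ = -Θ₂) (hΘ₂inv : IsUnit Θ₂.det)
    (J₁ : Matrix (Fin 2 × Fin k₁) (Fin 2 × Fin k₁) ℝ)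
    (hJ₁ : J₁ = (!![0, 1; -1, 0] : Matrix (Fin 2) (Fin 2) ℝ) ⊗ₖ (1 : Matrix (Fin k₁) (Fin k₁) ℝ))
    (J₂ : Matrix (Fin 2 × Fin k₂) (Fin 2 × Fin k₂) ℝ)
    (hJ₂ : J₂ = (!![0, 1; -1, 0] : Matrix (Fin 2) (Fin 2) ℝ) ⊗ₖ (1 : Matrix (Fin k₂) (Fin k₂) ℝ))
    (A : Matrix (Fin n) (Fin n) ℝ) (B : Matrix (Fin n) (Fin 2 × Fin k₁) ℝ)
    (C : Matrix (Fin p₁) (Fin n) ℝ) (D : Matrix (Fin p₁) (Fin 2 × Fin k₁) ℝ)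
    (hD : D * Dᵀ = 1) (E : Matrix (Fin n) (Fin p₂) ℝ)
    (d : Matrix (Fin p₂) (Fin 2 × Fin k₂) ℝ) (hd : d * dᵀ = 1)
    (F : Matrix (Fin r) (Fin n) ℝ) (G : Matrix (Fin r) (Fin p₂) ℝ)
    (Jt₁ : Matrix (Fin p₁) (Fin p₁) ℝ) (hJt₁ : Jt₁ = D * J₁ * Dᵀ)
    -- the controller parameters Π = (R₂, b, e) and the associated matrices
    (R₂ : Matrix (Fin n) (Fin n) ℝ) (hR₂ : R₂ᵀ = R₂)
    (b : Matrix (Fin n) (Fin 2 × Fin k₂) ℝ) (e : Matrix (Fin n) (Fin p₁) ℝ)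
    (a : Matrix (Fin n) (Fin n) ℝ)
    (ha : a = (2 : ℝ) • (Θ₂ * R₂) - (1 / 2 : ℝ) • ((b * J₂ * bᵀ + e * Jt₁ * eᵀ) * Θ₂⁻¹))
    (c : Matrix (Fin p₂) (Fin n) ℝ) (hc : c = -(d * J₂ * bᵀ * Θ₂⁻¹))
    (𝒜 : Matrix (Fin n ⊕ Fin n) (Fin n ⊕ Fin n) ℝ)
    (h𝒜 : 𝒜 = fromBlocks A (E * c) (e * C) a)
    (ℬ : Matrix (Fin n ⊕ Fin n) ((Fin 2 × Fin k₁) ⊕ (Fin 2 × Fin k₂)) ℝ)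
    (hℬ : ℬ = fromBlocks B (E * d) (e * D) b)
    (𝒞 : Matrix (Fin r) (Fin n ⊕ Fin n) ℝ) (h𝒞 : 𝒞 = fromCols F (G * c))
    -- a symplectic similarity transformation σ and the transformed parameters Π̃
    (σ : Matrix (Fin n) (Fin n) ℝ) (hσ : σ * Θ₂ * σᵀ = Θ₂)
    (R₂' : Matrix (Fin n) (Fin n) ℝ) (hR₂' : R₂' = (σ⁻¹)ᵀ * R₂ * σ⁻¹)
    (b' : Matrix (Fin n) (Fin 2 × Fin k₂) ℝ) (hb' : b' = σ * b)
    (e' : Matrix (Fin n) (Fin p₁) ℝ) (he' : e' = σ * e)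
    (a' : Matrix (Fin n) (Fin n) ℝ)
    (ha' : a' = (2 : ℝ) • (Θ₂ * R₂') - (1 / 2 : ℝ) • ((b' * J₂ * b'ᵀ + e' * Jt₁ * e'ᵀ) * Θ₂⁻¹))
    (c' : Matrix (Fin p₂) (Fin n) ℝ) (hc' : c' = -(d * J₂ * b'ᵀ * Θ₂⁻¹))
    (𝒜' : Matrix (Fin n ⊕ Fin n) (Fin n ⊕ Fin n) ℝ)
    (h𝒜' : 𝒜' = fromBlocks A (E * c') (e' * C) a')
    (ℬ' : Matrix (Fin n ⊕ Fin n) ((Fin 2 × Fin k₁) ⊕ (Fin 2 × Fin k₂)) ℝ)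
    (hℬ' : ℬ' = fromBlocks B (E * d) (e' * D) b')
    (𝒞' : Matrix (Fin r) (Fin n ⊕ Fin n) ℝ) (h𝒞' : 𝒞' = fromCols F (G * c'))
    (S : Matrix (Fin n ⊕ Fin n) (Fin n ⊕ Fin n) ℝ) (hS : S = fromBlocks 1 0 0 σ) :
    𝒜' = S * 𝒜 * S⁻¹ ∧
    ℬ' = S * ℬ ∧
    𝒞' = 𝒞 * S⁻¹ ∧
    (∀ T : ℝ, 0 < T →
      (IsHurwitz (𝒜' - (1 / (2 * T)) • 1) ↔ IsHurwitz (𝒜 - (1 / (2 * T)) • 1))) ∧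
    (∀ T : ℝ, 0 < T →
      ∀ Sgm PT : Matrix (Fin n ⊕ Fin n) (Fin n ⊕ Fin n) ℝ, Sgmᵀ = Sgm →
        (𝒜 - (1 / (2 * T)) • 1) * PT + PT * (𝒜 - (1 / (2 * T)) • 1)ᵀ +
          (1 / T) • Sgm + ℬ * ℬᵀ = 0 →
        ((𝒜' - (1 / (2 * T)) • 1) * (S * PT * Sᵀ) + (S * PT * Sᵀ) * (𝒜' - (1 / (2 * T)) • 1)ᵀ +
            (1 / T) • (S * Sgm * Sᵀ) + ℬ' * ℬ'ᵀ = 0 ∧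
          (1 / 2 : ℝ) * (𝒞'ᵀ * 𝒞' * (S * PT * Sᵀ)).trace =
            (1 / 2 : ℝ) * (𝒞ᵀ * 𝒞 * PT).trace)) :=
  symplectic_invariance_discounted_cost_general Θ₂ hΘ₂inv J₂ A B C D E d F G Jt₁ R₂ b e a ha c hc 𝒜
    h𝒜 ℬ hℬ 𝒞 h𝒞 σ hσ R₂' hR₂' b' hb' e' he' a' ha' c' hc' 𝒜' h𝒜' ℬ' hℬ' 𝒞' h𝒞' S hS
end

section
/- Let Σ ∈ ℝ^{2n×2n} be symmetric with block partition Σ = [[Σ₁₁, Σ₁₂],[Σ₂₁, Σ₂₂]] into n×n blocks (so Σ₁₂ = Σ₂₁ᵀ), with Σ₂₂ invertible. Let F ∈ ℝ^{r×n} and let G ∈ ℝ^{r×p₂} have full column rank (so GᵀG is invertible). Suppose c₀ ∈ ℝ^{p₂×n} satisfies Σ₂₁FᵀG + Σ₂₂ c₀ᵀ GᵀG = 0. Then: (i) c₀ = −(GᵀG)⁻¹GᵀF Σ₁₂ Σ₂₂⁻¹; (ii) with 𝒞 := [F, Gc₀] ∈ ℝ^{r×2n}, the lower-right n×n block of 𝒞ᵀ𝒞Σ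 is zero; (iii) if, in addition, c₀ has full column rank and, for given B ∈ ℝ^{n×m₁}, C ∈ ℝ^{p₁×n}, D ∈ ℝ^{p₁×m₁}, the matrix e₀ ∈ ℝ^{n×p₁} satisfies (𝒞ᵀ𝒞Σ)₂₁ Cᵀ + (𝒞ᵀ𝒞)₂₁ B Dᵀ + (𝒞ᵀ𝒞)₂₂ e₀ = 0 (where the subscripts denote the n×n blocks), then e₀ = −Σ₂₁Cᵀ − (c₀ᵀGᵀGc₀)⁻¹ c₀ᵀGᵀF (Σ₁₁Cᵀ + BDᵀ). -/
/-!
Transposing the stationarity condition gives `GᵀF Σ₁₂ + GᵀG c₀ Σ₂₂ = 0`. Since `GᵀG` and `Σ₂₂` are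
invertible this is solved for `c₀`, giving (i), and multiplied on the left by `c₀ᵀ` it is exactly
the block `(𝒞ᵀ𝒞Σ)₂₂`, giving (ii). In (iii) the equation for `e₀` reads
`c₀ᵀGᵀF (Σ₁₁Cᵀ + BDᵀ) + (c₀ᵀGᵀGc₀)(Σ₂₁Cᵀ + e₀) = 0`, and the Gram matrix `c₀ᵀGᵀGc₀ = (Gc₀)ᵀ(Gc₀)`
is invertible because `Gc₀` has full column rank.
-/

open Matrix

namespace Matrix

variable {l m n l' m' n' K : Type*}

section Blocks

variable [Fintype l] [CommRing K] (A : Matrix l m K) (B : Matrix l n K)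

theorem toBlocks₂₁_transpose_fromCols_mul_self :
    toBlocks₂₁ ((fromCols A B)ᵀ * fromCols A B) = Bᵀ * A := by
  rw [transpose_fromCols, fromRows_mul_fromCols, toBlocks_fromBlocks₂₁]

theorem toBlocks₂₂_transpose_fromCols_mul_self :
    toBlocks₂₂ ((fromCols A B)ᵀ * fromCols A B) = Bᵀ * B := by
  rw [transpose_fromCols, fromRows_mul_fromCols, toBlocks_fromBlocks₂₂]

variable [Fintype m] [Fintype n]
  (S₁₁ : Matrix m l' K) (S₁₂ : Matrix m n' K) (S₂₁ : Matrix n l' K) (S₂₂ : Matrix n n' K)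

theorem toBlocks₂₁_transpose_fromCols_mul_self_mul_fromBlocks :
    toBlocks₂₁ ((fromCols A B)ᵀ * fromCols A B * fromBlocks S₁₁ S₁₂ S₂₁ S₂₂) =
      Bᵀ * (A * S₁₁ + B * S₂₁) := by
  rw [Matrix.mul_assoc, fromCols_mul_fromBlocks, transpose_fromCols, fromRows_mul_fromCols,
    toBlocks_fromBlocks₂₁]

theorem toBlocks₂₂_transpose_fromCols_mul_self_mul_fromBlocks :
    toBlocks₂₂ ((fromCols A B)ᵀ * fromCols A B * fromBlocks S₁₁ S₁₂ S₂₁ S₂₂) =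
      Bᵀ * (A * S₁₂ + B * S₂₂) := by
  rw [Matrix.mul_assoc, fromCols_mul_fromBlocks, transpose_fromCols, fromRows_mul_fromCols,
    toBlocks_fromBlocks₂₂]

end Blocks

variable [Fintype m] [DecidableEq m]

theorem eq_neg_inv_mul_of_add_mul_eq_zero [CommRing K] {A : Matrix m m K} (hA : IsUnit A.det)
    {X Y : Matrix m n K} (h : Y + A * X = 0) : X = -(A⁻¹ * Y) := by
  rw [← nonsing_inv_mul_cancel_left A X hA, eq_neg_of_add_eq_zero_right h, Matrix.mul_neg]

theorem isUnit_det_of_rank_eq_card [Field K] {A : Matrix m m K} (h : A.rank = Fintype.card m) :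
    IsUnit A.det := by
  rw [← isUnit_iff_isUnit_det, ← mulVec_surjective_iff_isUnit, ← coe_mulVecLin,
    ← LinearMap.range_eq_top]
  exact Submodule.eq_top_of_finrank_eq (h.trans (Module.finrank_fintype_fun_eq_card K).symm)

variable [Fintype l] [Field K] [LinearOrder K] [IsStrictOrderedRing K]

theorem isUnit_det_transpose_mul_self_of_rank_eq_card {A : Matrix l m K}
    (h : A.rank = Fintype.card m) : IsUnit (Aᵀ * A).det :=
  isUnit_det_of_rank_eq_card ((rank_transpose_mul_self A).trans h)

theorem rank_mul_eq_right_of_rank_eq_card [Fintype n] {A : Matrix l m K}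
    (hA : A.rank = Fintype.card m) (B : Matrix m n K) : (A * B).rank = B.rank := by
  refine le_antisymm (rank_mul_le_right A B) ?_
  calc B.rank = (Aᵀ * A * B).rank :=
        (rank_mul_eq_right_of_isUnit_det _ B (isUnit_det_transpose_mul_self_of_rank_eq_card hA)).symm
    _ ≤ (A * B).rank := by rw [Matrix.mul_assoc]; exact rank_mul_le_right _ _

end Matrix

theorem zero_horizon_controller_limit_general
    {n r p₂ p₁ m₁ : ℕ}
    (S₁₁ S₁₂ S₂₁ S₂₂ : Matrix (Fin n) (Fin n) ℝ)
    (hS₂₂ : S₂₂ᵀ = S₂₂) (hS₁₂ : S₁₂ = S₂₁ᵀ)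
    (hS₂₂inv : IsUnit S₂₂.det)
    (F : Matrix (Fin r) (Fin n) ℝ)
    (G : Matrix (Fin r) (Fin p₂) ℝ) (hG : G.rank = p₂)
    (c₀ : Matrix (Fin p₂) (Fin n) ℝ)
    (hc₀ : S₂₁ * Fᵀ * G + S₂₂ * c₀ᵀ * (Gᵀ * G) = 0)
    (𝒞 : Matrix (Fin r) (Fin n ⊕ Fin n) ℝ) (h𝒞 : 𝒞 = fromCols F (G * c₀))
    (Sfull : Matrix (Fin n ⊕ Fin n) (Fin n ⊕ Fin n) ℝ)
    (hSfull : Sfull = fromBlocks S₁₁ S₁₂ S₂₁ S₂₂) :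
    c₀ = -((Gᵀ * G)⁻¹ * Gᵀ * F * S₁₂ * S₂₂⁻¹) ∧
    toBlocks₂₂ (𝒞ᵀ * 𝒞 * Sfull) = 0 ∧
    (∀ (B : Matrix (Fin n) (Fin m₁) ℝ) (C : Matrix (Fin p₁) (Fin n) ℝ)
        (D : Matrix (Fin p₁) (Fin m₁) ℝ) (e₀ : Matrix (Fin n) (Fin p₁) ℝ),
      c₀.rank = n →
      toBlocks₂₁ (𝒞ᵀ * 𝒞 * Sfull) * Cᵀ + toBlocks₂₁ (𝒞ᵀ * 𝒞) * B * Dᵀ +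
        toBlocks₂₂ (𝒞ᵀ * 𝒞) * e₀ = 0 →
      e₀ = -(S₂₁ * Cᵀ) -
        (c₀ᵀ * Gᵀ * G * c₀)⁻¹ * c₀ᵀ * Gᵀ * F * (S₁₁ * Cᵀ + B * Dᵀ)) := by
  subst h𝒞 hSfull
  have hGfull : G.rank = Fintype.card (Fin p₂) := by rw [hG, Fintype.card_fin]
  have hc₀_transpose : Gᵀ * F * S₁₂ + Gᵀ * G * (c₀ * S₂₂) = 0 := by
    simpa [transpose_mul, hS₂₂, hS₁₂, Matrix.mul_assoc, add_comm] using congrArg transpose hc₀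
  have hGG := isUnit_det_transpose_mul_self_of_rank_eq_card hGfull
  simp only [toBlocks₂₁_transpose_fromCols_mul_self, toBlocks₂₂_transpose_fromCols_mul_self,
    toBlocks₂₁_transpose_fromCols_mul_self_mul_fromBlocks,
    toBlocks₂₂_transpose_fromCols_mul_self_mul_fromBlocks, transpose_mul]
  refine ⟨?_, ?_, fun B C D e₀ hc₀rank heq => ?_⟩
  · calc c₀ = c₀ * S₂₂ * S₂₂⁻¹ := (mul_nonsing_inv_cancel_right _ _ hS₂₂inv).symm
      _ = _ := by
        rw [eq_neg_inv_mul_of_add_mul_eq_zero hGG hc₀_transpose]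
        simp only [Matrix.neg_mul, Matrix.mul_assoc]
  · calc c₀ᵀ * Gᵀ * (F * S₁₂ + G * c₀ * S₂₂)
          = c₀ᵀ * (Gᵀ * F * S₁₂ + Gᵀ * G * (c₀ * S₂₂)) := by
            simp only [Matrix.mul_add, Matrix.mul_assoc]
      _ = 0 := by rw [hc₀_transpose, Matrix.mul_zero]
  · have hGc₀ : (G * c₀).rank = Fintype.card (Fin n) := by
      rw [rank_mul_eq_right_of_rank_eq_card hGfull, hc₀rank, Fintype.card_fin]
    have hN : IsUnit (c₀ᵀ * Gᵀ * G * c₀).det := by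
      simpa [transpose_mul, Matrix.mul_assoc] using
        isUnit_det_transpose_mul_self_of_rank_eq_card hGc₀
    have hsolve := eq_neg_inv_mul_of_add_mul_eq_zero hN
      (X := S₂₁ * Cᵀ + e₀) (Y := c₀ᵀ * Gᵀ * F * (S₁₁ * Cᵀ + B * Dᵀ)) (by
        rw [← heq]; simp only [Matrix.mul_add, Matrix.add_mul, Matrix.mul_assoc]; abel)
    simp only [Matrix.mul_assoc] at hsolve ⊢
    linear_combination (norm := module) hsolve

/-- **Zero-horizon limits of the controller output and gain matrices.**
If `S₂₁FᵀG + S₂₂c₀ᵀGᵀG = 0` with `S₂₂` invertible and `G` of full column rank, then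
(i) `c₀ = −(GᵀG)⁻¹GᵀFS₁₂S₂₂⁻¹`; (ii) the lower-right block of `𝒞ᵀ𝒞Σ` vanishes for
`𝒞 = [F, Gc₀]`; and (iii) if moreover `c₀` has full column rank and
`(𝒞ᵀ𝒞Σ)₂₁Cᵀ + (𝒞ᵀ𝒞)₂₁BDᵀ + (𝒞ᵀ𝒞)₂₂e₀ = 0`, then
`e₀ = −S₂₁Cᵀ − (c₀ᵀGᵀGc₀)⁻¹c₀ᵀGᵀF(S₁₁Cᵀ + BDᵀ)`. -/
theorem zero_horizon_controller_limit
    {n r p₂ p₁ m₁ : ℕ}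
    (S₁₁ S₁₂ S₂₁ S₂₂ : Matrix (Fin n) (Fin n) ℝ)
    (hS₁₁ : S₁₁ᵀ = S₁₁) (hS₂₂ : S₂₂ᵀ = S₂₂) (hS₁₂ : S₁₂ = S₂₁ᵀ)
    (hS₂₂inv : IsUnit S₂₂.det)
    (F : Matrix (Fin r) (Fin n) ℝ)
    (G : Matrix (Fin r) (Fin p₂) ℝ) (hG : G.rank = p₂)
    (c₀ : Matrix (Fin p₂) (Fin n) ℝ)
    (hc₀ : S₂₁ * Fᵀ * G + S₂₂ * c₀ᵀ * (Gᵀ * G) = 0)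
    (𝒞 : Matrix (Fin r) (Fin n ⊕ Fin n) ℝ) (h𝒞 : 𝒞 = fromCols F (G * c₀))
    (Sfull : Matrix (Fin n ⊕ Fin n) (Fin n ⊕ Fin n) ℝ)
    (hSfull : Sfull = fromBlocks S₁₁ S₁₂ S₂₁ S₂₂) :
    c₀ = -((Gᵀ * G)⁻¹ * Gᵀ * F * S₁₂ * S₂₂⁻¹) ∧
    toBlocks₂₂ (𝒞ᵀ * 𝒞 * Sfull) = 0 ∧
    (∀ (B : Matrix (Fin n) (Fin m₁) ℝ) (C : Matrix (Fin p₁) (Fin n) ℝ)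
        (D : Matrix (Fin p₁) (Fin m₁) ℝ) (e₀ : Matrix (Fin n) (Fin p₁) ℝ),
      c₀.rank = n →
      toBlocks₂₁ (𝒞ᵀ * 𝒞 * Sfull) * Cᵀ + toBlocks₂₁ (𝒞ᵀ * 𝒞) * B * Dᵀ +
        toBlocks₂₂ (𝒞ᵀ * 𝒞) * e₀ = 0 →
      e₀ = -(S₂₁ * Cᵀ) -
        (c₀ᵀ * Gᵀ * G * c₀)⁻¹ * c₀ᵀ * Gᵀ * F * (S₁₁ * Cᵀ + B * Dᵀ)) :=
  zero_horizon_controller_limit_general S₁₁ S₁₂ S₂₁ S₂₂ hS₂₂ hS₁₂ hS₂₂inv F G hG c₀ hc₀ 𝒞 h𝒞 Sfull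
    hSfull
end
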